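/- arXiv:1611.07127 — 2 statements merged into one kernel-verified Lean document; each statement's English description precedes it below -/
import Mathlib

section
/- Let G be a group acting on a type X, and let d be a natural number. Equip the d-th wreath product W = (Fin d → G) ⋊ Equiv.Perm (Fin d) (where a permutation τ acts on Fin d → G by permuting coordinates) with its natural action on Fin d → X given by ((g, τ) • x) i = g i • x (τ⁻¹ i). Then the orbit space of this action of W on Fin d → X is in bijection with Sym d Q, the type of multisets of cardinality d over the orbit space Q of the G-action on X. (This is the identification C^d/(G^d ⋊ S_d) ≅ Sym^d(C/G) underlying the first proof of Theorem 1(2).) -/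
/-- The homomorphism through which `Equiv.Perm (Fin d)` acts on the direct power `Fin d → G`
by permuting coordinates. -/
def permCoordAut (G : Type*) [Group G] (d : ℕ) : Equiv.Perm (Fin d) →* MulAut (Fin d → G) where
  toFun τ :=
    { toFun := fun g => fun i => g (τ⁻¹ i)
      invFun := fun g => fun i => g (τ i)
      left_inv := fun g => by funext i; simp
      right_inv := fun g => by funext i; simp
      map_mul' := fun g h => rfl }
  map_one' := by
    ext g i
    simp
  map_mul' σ τ := by
    ext g i
    simp

/-- The `d`-th wreath product `G ≀ S_d = (Fin d → G) ⋊ Equiv.Perm (Fin d)`. -/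
abbrev WreathProduct (G : Type*) [Group G] (d : ℕ) : Type _ :=
  SemidirectProduct (Fin d → G) (Equiv.Perm (Fin d)) (permCoordAut G d)

instance WreathProduct.instSMul (G X : Type*) [Group G] [MulAction G X] (d : ℕ) :
    SMul (WreathProduct G d) (Fin d → X) :=
  ⟨fun w x => fun i => w.left i • x (w.right⁻¹ i)⟩

/-- The natural action of the wreath product `(Fin d → G) ⋊ Equiv.Perm (Fin d)` on `Fin d → X`,
given by `((g, τ) • x) i = g i • x (τ⁻¹ i)`. -/
instance WreathProduct.instMulAction (G X : Type*) [Group G] [MulAction G X] (d : ℕ) :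
    MulAction (WreathProduct G d) (Fin d → X) where
  one_smul x := by
    funext i
    show (1 : WreathProduct G d).left i • x ((1 : WreathProduct G d).right⁻¹ i) = x i
    simp
  mul_smul a b x := by
    funext i
    show (a * b).left i • x ((a * b).right⁻¹ i)
        = a.left i • (b.left (a.right⁻¹ i) • x (b.right⁻¹ (a.right⁻¹ i)))
    simp [mul_smul, permCoordAut]

/-!
Send a tuple in `Fin d → X` to the multiset of the `G`-orbits of its coordinates. This map is
surjective, and two tuples have the same image iff a permutation of the coordinates matches their
orbits one by one, which is exactly what it means to lie in one orbit of the wreath product.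
Tuples over any type define the same multiset iff they differ by a permutation, obtained by gluing
bijections between fibres of equal size.
-/

open Finset MulAction

theorem Fintype.card_subtype_eq_count_map {ι α : Type*} [Fintype ι] [DecidableEq α]
    (x : ι → α) (a : α) : Fintype.card {i // x i = a} = (univ.val.map x).count a := by
  simp [Multiset.count_map, Fintype.card_subtype, Finset.card, eq_comm]

theorem Multiset.map_univ_eq_map_univ_iff {ι α : Type*} [Fintype ι] {x y : ι → α} :
    univ.val.map x = univ.val.map y ↔ ∃ σ : Equiv.Perm ι, y ∘ σ = x := by
  -- not `classical`: the fibre cardinalities must use the instance behind `Multiset.count`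
  have := Classical.decEq α
  refine ⟨fun h => ?_, ?_⟩
  · have fiberEquiv (a : α) : {i // x i = a} ≃ {i // y i = a} :=
      Fintype.equivOfCardEq <| by simp only [Fintype.card_subtype_eq_count_map, h]
    exact ⟨Equiv.ofFiberEquiv fiberEquiv, funext (Equiv.ofFiberEquiv_map fiberEquiv)⟩
  · rintro ⟨σ, rfl⟩
    rw [← Multiset.map_map, Multiset.map_univ_val_equiv]

namespace Sym

variable {α : Type*} {n : ℕ}

def ofFn (x : Fin n → α) : Sym α n :=
  ofVector (List.Vector.ofFn x)

theorem ofVector_surjective : Function.Surjective (ofVector : List.Vector α n → Sym α n) :=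
  fun s => ⟨⟨s.1.toList, by simp⟩, Subtype.ext s.1.coe_toList⟩

theorem ofFn_surjective : Function.Surjective (ofFn : (Fin n → α) → Sym α n) :=
  ofVector_surjective.comp (Equiv.vectorEquivFin α n).symm.surjective

theorem ofFn_eq_ofFn_iff {x y : Fin n → α} :
    ofFn x = ofFn y ↔ ∃ σ : Equiv.Perm (Fin n), y ∘ σ = x := by
  rw [← Multiset.map_univ_eq_map_univ_iff, Fin.univ_val_map, Fin.univ_val_map,
    ← List.Vector.toList_ofFn, ← List.Vector.toList_ofFn]
  exact Subtype.ext_iff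

end Sym

namespace WreathProduct

variable {G X : Type*} [Group G] [MulAction G X] {d : ℕ}

theorem smul_apply (w : WreathProduct G d) (x : Fin d → X) (i : Fin d) :
    (w • x) i = w.left i • x (w.right⁻¹ i) :=
  rfl

theorem mem_orbit_iff {x y : Fin d → X} :
    x ∈ orbit (WreathProduct G d) y ↔ ∃ σ : Equiv.Perm (Fin d), ∀ i, x i ∈ orbit G (y (σ i)) := by
  constructor
  · rintro ⟨w, rfl⟩
    exact ⟨w.right⁻¹, fun i => ⟨w.left i, rfl⟩⟩
  · rintro ⟨σ, hσ⟩
    choose g hg using hσ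
    exact ⟨⟨g, σ⁻¹⟩, funext fun i => by simpa [smul_apply] using hg i⟩

theorem orbitRel_iff_ofFn_eq {x y : Fin d → X} :
    orbitRel (WreathProduct G d) (Fin d → X) x y ↔
      Sym.ofFn (Quotient.mk (orbitRel G X) ∘ x) = Sym.ofFn (Quotient.mk _ ∘ y) := by
  simp only [orbitRel_apply, mem_orbit_iff, Sym.ofFn_eq_ofFn_iff, funext_iff, Function.comp_apply,
    Quotient.eq]
  exact exists_congr fun σ => forall_congr' fun i => mem_orbit_symm

end WreathProduct

/-- The orbit space of the natural action of the wreath product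
`(Fin d → G) ⋊ Equiv.Perm (Fin d)` on `Fin d → X` is in bijection with `Sym d Q`, where `Q`
is the orbit space of the `G`-action on `X`. -/
theorem wreathProduct_orbitSpace_equiv_sym (G X : Type*) [Group G] [MulAction G X] (d : ℕ) :
    Nonempty (Quotient (MulAction.orbitRel (WreathProduct G d) (Fin d → X)) ≃
      Sym (Quotient (MulAction.orbitRel G X)) d) := by
  have surj : Function.Surjective fun x : Fin d → X => Sym.ofFn (Quotient.mk (orbitRel G X) ∘ x) :=
    Sym.ofFn_surjective.comp Quotient.mk_surjective.comp_left
  exact ⟨(Quotient.congrRight fun _ _ => WreathProduct.orbitRel_iff_ofFn_eq).trans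
    (Setoid.quotientKerEquivOfSurjective _ surj)⟩
end

section
/- Let E be an additive abelian group, Q an additive subgroup of E, and d a natural number. Let A = {x : Fin (d+1) → E | ∑ i, x i = 0} and A_Q = {x : Fin (d+1) → E | ∑ i, x i = 0 and x i ∈ Q for all i}. Consider the action on A of the group generated by the translations by elements of A_Q and by the coordinate permutations from Equiv.Perm (Fin (d+1)) (equivalently, of the semidirect product A_Q ⋊ Equiv.Perm (Fin (d+1))). Then the orbit space of this action is in bijection with {s : Sym (d+1) (E ⧸ Q) | the sum of s equals 0}, the bijection being induced by reducing each coordinate modulo Q and taking the underlying multiset. -/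
/-- The subgroup of `Fin n → E` consisting of tuples whose coordinates sum to zero. -/
def sumZeroSubgroup (E : Type*) [AddCommGroup E] (n : ℕ) : AddSubgroup (Fin n → E) where
  carrier := {x | ∑ i, x i = 0}
  add_mem' {x y} hx hy := by
    simp only [Set.mem_setOf_eq, Pi.add_apply, Finset.sum_add_distrib] at *
    rw [hx, hy, add_zero]
  zero_mem' := by simp
  neg_mem' {x} hx := by
    simp only [Set.mem_setOf_eq, Pi.neg_apply, Finset.sum_neg_distrib] at *
    rw [hx, neg_zero]

/-- The coordinate permutation `τ` as a bijection of the sum-zero subgroup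
`A = {x : Fin n → E | ∑ i, x i = 0}`. -/
def permOnSumZero (E : Type*) [AddCommGroup E] (n : ℕ) (τ : Equiv.Perm (Fin n)) :
    Equiv.Perm (sumZeroSubgroup E n) where
  toFun x := ⟨fun i => x.1 (τ⁻¹ i), by
    change ∑ i, x.1 (τ⁻¹ i) = 0
    simpa using (Equiv.sum_comp τ⁻¹ x.1).trans x.2⟩
  invFun x := ⟨fun i => x.1 (τ i), by
    change ∑ i, x.1 (τ i) = 0
    simpa using (Equiv.sum_comp τ x.1).trans x.2⟩
  left_inv x := by apply Subtype.ext; funext i; simp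
  right_inv x := by apply Subtype.ext; funext i; simp

/-- The group of bijections of `A = {x : Fin (d+1) → E | ∑ i, x i = 0}` generated by the
translations by elements of `A_Q = {x ∈ A | ∀ i, x i ∈ Q}` together with the coordinate
permutations; this is (isomorphic to) the semidirect product `A_Q ⋊ Equiv.Perm (Fin (d+1))`. -/
def sumZeroModGroup (E : Type*) [AddCommGroup E] (Q : AddSubgroup E) (d : ℕ) :
    Subgroup (Equiv.Perm (sumZeroSubgroup E (d + 1))) :=
  Subgroup.closure
    ((fun q : sumZeroSubgroup E (d + 1) => Equiv.addRight q) ''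
        {q : sumZeroSubgroup E (d + 1) | ∀ i, (q : Fin (d + 1) → E) i ∈ Q} ∪
      Set.range (permOnSumZero E (d + 1)))

/-!
Reducing the coordinates modulo `Q` and forgetting their order is unchanged by the generators,
hence constant on orbits. Conversely, if `x` and `y` have the same multiset of residues, a
permutation moves `x` to some `z` with `z i ≡ y i` for all `i`; then `y - z` has sum zero and
coordinates in `Q`, so translating by it finishes the job. For surjectivity, lift the residues
arbitrarily: their sum lies in `Q`, and subtracting it from one coordinate lands in `A`
without changing any residue.
-/

theorem Equiv.Perm.exists_comp_eq_of_map_univ_eq {ι α : Type*} [Fintype ι] {f g : ι → α}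
    (h : Finset.univ.val.map f = Finset.univ.val.map g) : ∃ σ : Equiv.Perm ι, g ∘ σ = f := by
  classical
  have card_fiber (c : α) : Fintype.card {i // f i = c} = Fintype.card {i // g i = c} := by
    simpa [Fintype.card_subtype, Finset.card, Multiset.count_map, eq_comm]
      using congrArg (Multiset.count c) h
  exact ⟨Equiv.ofFiberEquiv fun c => Fintype.equivOfCardEq (card_fiber c),
    funext (Equiv.ofFiberEquiv_map _)⟩

theorem Equiv.Perm.comp_eq_of_mem_closure {α β : Type*} {f : α → β} {S : Set (Equiv.Perm α)}
    (hS : ∀ g ∈ S, f ∘ g = f) {g : Equiv.Perm α} (hg : g ∈ Subgroup.closure S) : f ∘ g = f := by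
  induction hg using Subgroup.closure_induction with
  | mem g hg => exact hS g hg
  | one => rfl
  | mul a b _ _ ha hb => rw [Equiv.Perm.coe_mul, ← Function.comp_assoc, ha, hb]
  | inv a _ ha =>
    calc f ∘ ⇑a⁻¹ = (f ∘ a) ∘ ⇑a⁻¹ := by rw [ha]
      _ = f := by ext; simp

theorem Multiset.exists_ofFn_eq {α : Type*} {n : ℕ} (m : Multiset α) (hm : m.card = n) :
    ∃ g : Fin n → α, (List.ofFn g : Multiset α) = m := by
  obtain ⟨l, rfl⟩ := Quot.exists_rep m
  subst hm
  exact ⟨l.get, congrArg _ (List.ofFn_get l)⟩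

theorem QuotientAddGroup.exists_lift_sum_eq_zero {E ι : Type*} [AddCommGroup E] [Fintype ι]
    [Nonempty ι] (Q : AddSubgroup E) (g : ι → E ⧸ Q) (hg : ∑ i, g i = 0) :
    ∃ x : ι → E, ∑ i, x i = 0 ∧ ∀ i, (x i : E ⧸ Q) = g i := by
  classical
  obtain ⟨i₀⟩ := ‹Nonempty ι›
  choose y hy using fun i => QuotientAddGroup.mk_surjective (g i)
  have hQ : ∑ i, y i ∈ Q := by
    rw [← QuotientAddGroup.eq_zero_iff, QuotientAddGroup.mk_sum]
    simpa [hy] using hg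
  refine ⟨y - Pi.single i₀ (∑ i, y i), by simp [Finset.sum_sub_distrib], fun i => ?_⟩
  have : (Pi.single i₀ (∑ i, y i) : ι → E) i ∈ Q := by
    rcases eq_or_ne i i₀ with rfl | hi
    · simpa using hQ
    · simp [hi]
  simp [QuotientAddGroup.mk_sub, (QuotientAddGroup.eq_zero_iff _).2 this, hy]

section reduction

variable {E : Type*} [AddCommGroup E] (Q : AddSubgroup E) (d : ℕ)

def reduceModSym (x : sumZeroSubgroup E (d + 1)) :
    {s : Sym (E ⧸ Q) (d + 1) // (s : Multiset (E ⧸ Q)).sum = 0} :=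
  ⟨⟨List.ofFn fun i => ((x : Fin (d + 1) → E) i : E ⧸ Q), by simp⟩, by
    change (List.ofFn _).sum = 0
    rw [List.sum_ofFn, ← QuotientAddGroup.mk_sum, x.2, QuotientAddGroup.mk_zero]⟩

theorem reduceModSym_surjective : Function.Surjective (reduceModSym (E := E) Q d) := by
  rintro ⟨s, hs⟩
  obtain ⟨g, hg⟩ := Multiset.exists_ofFn_eq (s : Multiset (E ⧸ Q)) s.2
  obtain ⟨x, hx, hxg⟩ := QuotientAddGroup.exists_lift_sum_eq_zero Q g
    (by rwa [← List.sum_ofFn, ← Multiset.sum_coe, hg])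
  refine ⟨⟨x, hx⟩, Subtype.ext (Sym.coe_injective ?_)⟩
  simpa [reduceModSym, hxg] using hg

theorem reduceModSym_comp_of_mem {g : Equiv.Perm (sumZeroSubgroup E (d + 1))}
    (hg : g ∈ sumZeroModGroup E Q d) : reduceModSym Q d ∘ g = reduceModSym Q d := by
  refine Equiv.Perm.comp_eq_of_mem_closure ?_ hg
  rintro _ (⟨q, hq, rfl⟩ | ⟨τ, rfl⟩) <;> funext x <;> refine Subtype.ext (Sym.coe_injective ?_)
  · simp [reduceModSym, QuotientAddGroup.mk_add, (QuotientAddGroup.eq_zero_iff _).2 (hq _)]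
  · exact Multiset.coe_eq_coe.2
      (Equiv.Perm.ofFn_comp_perm τ⁻¹ fun i => ((x : Fin (d + 1) → E) i : E ⧸ Q))

theorem exists_mem_sumZeroModGroup_of_reduceModSym_eq {x y : sumZeroSubgroup E (d + 1)}
    (h : reduceModSym Q d x = reduceModSym Q d y) :
    ∃ g ∈ sumZeroModGroup E Q d, g x = y := by
  have hmap : Finset.univ.val.map (fun i => ((y : Fin (d + 1) → E) i : E ⧸ Q)) =
      Finset.univ.val.map (fun i => ((x : Fin (d + 1) → E) i : E ⧸ Q)) := by
    rw [Fin.univ_val_map, Fin.univ_val_map]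
    exact congrArg (fun s => ((s.1 : Sym (E ⧸ Q) (d + 1)) : Multiset (E ⧸ Q))) h.symm
  obtain ⟨σ, hσ⟩ := Equiv.Perm.exists_comp_eq_of_map_univ_eq hmap
  set z := permOnSumZero E (d + 1) σ⁻¹ x
  have hq (i : Fin (d + 1)) : ((y - z : sumZeroSubgroup E (d + 1)) : Fin (d + 1) → E) i ∈ Q := by
    rw [← QuotientAddGroup.eq_zero_iff]
    simpa [z, permOnSumZero, sub_eq_zero] using (congrFun hσ i).symm
  refine ⟨Equiv.addRight (y - z) * permOnSumZero E (d + 1) σ⁻¹,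
    mul_mem (Subgroup.subset_closure (Or.inl ⟨y - z, hq, rfl⟩))
      (Subgroup.subset_closure (Or.inr ⟨σ⁻¹, rfl⟩)), ?_⟩
  exact add_sub_cancel z y

theorem orbitRel_sumZeroModGroup_iff (x y : sumZeroSubgroup E (d + 1)) :
    MulAction.orbitRel (sumZeroModGroup E Q d) _ x y ↔
      reduceModSym Q d x = reduceModSym Q d y := by
  rw [MulAction.orbitRel_apply]
  constructor
  · rintro ⟨g, rfl⟩
    exact congrFun (reduceModSym_comp_of_mem Q d g.2) y
  · intro h
    obtain ⟨g, hg, hgy⟩ := exists_mem_sumZeroModGroup_of_reduceModSym_eq Q d h.symm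
    exact ⟨⟨g, hg⟩, hgy⟩

end reduction

/-- The orbit space of the action on `A = {x : Fin (d+1) → E | ∑ i, x i = 0}` of the group
generated by translations by elements of `A_Q` and coordinate permutations (equivalently, of
`A_Q ⋊ Equiv.Perm (Fin (d+1))`) is in bijection with the multisets of cardinality `d+1` over
`E ⧸ Q` whose sum is zero, the bijection being induced by reducing each coordinate modulo `Q`
and taking the underlying multiset. -/
theorem orbitSpace_sumZeroModGroup_equiv_sym (E : Type*) [AddCommGroup E] (Q : AddSubgroup E)
    (d : ℕ) :
    ∃ e : Quotient (MulAction.orbitRel (sumZeroModGroup E Q d) (sumZeroSubgroup E (d + 1))) ≃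
        {s : Sym (E ⧸ Q) (d + 1) // (s : Multiset (E ⧸ Q)).sum = 0},
      ∀ x : sumZeroSubgroup E (d + 1),
        ((e (Quotient.mk (MulAction.orbitRel (sumZeroModGroup E Q d) (sumZeroSubgroup E (d + 1)))
              x) : Sym (E ⧸ Q) (d + 1)) : Multiset (E ⧸ Q)) =
          ((List.ofFn fun i => ((x : Fin (d + 1) → E) i : E ⧸ Q)) : Multiset (E ⧸ Q)) :=
  ⟨(Quotient.congrRight fun x y =>
        (orbitRel_sumZeroModGroup_iff Q d x y).trans Setoid.ker_def.symm).trans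
      (Setoid.quotientKerEquivOfSurjective _ (reduceModSym_surjective Q d)),
    fun _ => rfl⟩
end
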